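/- For all α ∈ (0,1], β > 0, and γ with 0 ≤ γ < β, the following inequality between exponents holds: 2α(β − γ) / (2α(β − γ) + 1) ≥ (2αβ / (2αβ + 1)) · (1 − γ / (β(α(β − γ) + 1))), with equality if and only if γ = 0. -/

import Mathlib

theorem exponent_gap_eq {α β γ : ℝ} (hA : 2 * α * (β - γ) + 1 ≠ 0) (hB : 2 * α * β + 1 ≠ 0)
    (hβ : β ≠ 0) (hC : α * (β - γ) + 1 ≠ 0) :
    2 * α * (β - γ) / (2 * α * (β - γ) + 1)
        - (2 * α * β / (2 * α * β + 1)) * (1 - γ / (β * (α * (β - γ) + 1)))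
      = 2 * α ^ 2 * β * γ * (β - γ)
          / ((2 * α * (β - γ) + 1) * (2 * α * β + 1) * (β * (α * (β - γ) + 1))) := by
  field_simp
  ring

theorem statement17_general (α β γ : ℝ) (hα0 : 0 < α) (hβ : 0 < β)
    (hγ0 : 0 ≤ γ) (hγβ : γ < β) :
    (2 * α * β / (2 * α * β + 1)) * (1 - γ / (β * (α * (β - γ) + 1)))
        ≤ 2 * α * (β - γ) / (2 * α * (β - γ) + 1) ∧
      (2 * α * (β - γ) / (2 * α * (β - γ) + 1)
          = (2 * α * β / (2 * α * β + 1)) * (1 - γ / (β * (α * (β - γ) + 1))) ↔ γ = 0) := by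
  have hβγ : 0 < β - γ := sub_pos.mpr hγβ
  have hA : 0 < 2 * α * (β - γ) + 1 := by positivity
  have hB : 0 < 2 * α * β + 1 := by positivity
  have hC : 0 < α * (β - γ) + 1 := by positivity
  have hgap := exponent_gap_eq hA.ne' hB.ne' hβ.ne' hC.ne'
  constructor
  · rw [← sub_nonneg, hgap]
    positivity
  · rw [← sub_eq_zero, hgap, div_eq_zero_iff, or_iff_left (by positivity)]
    simp [hα0.ne', hβ.ne', hβγ.ne']

/-- For `α ∈ (0,1]`, `β > 0`, and `0 ≤ γ < β`,
`2α(β−γ)/(2α(β−γ)+1) ≥ (2αβ/(2αβ+1))·(1 − γ/(β(α(β−γ)+1)))`,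
with equality if and only if `γ = 0`. -/
theorem statement17 (α β γ : ℝ) (hα0 : 0 < α) (hα1 : α ≤ 1) (hβ : 0 < β)
    (hγ0 : 0 ≤ γ) (hγβ : γ < β) :
    (2 * α * β / (2 * α * β + 1)) * (1 - γ / (β * (α * (β - γ) + 1)))
        ≤ 2 * α * (β - γ) / (2 * α * (β - γ) + 1) ∧
      (2 * α * (β - γ) / (2 * α * (β - γ) + 1)
          = (2 * α * β / (2 * α * β + 1)) * (1 - γ / (β * (α * (β - γ) + 1))) ↔ γ = 0) :=
  statement17_general α β γ hα0 hβ hγ0 hγβ
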